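/- Let K = ℝ((t^ℝ)) be the field of Hahn series over ℝ with value group ℝ and canonical valuation ν, let V be the space of finitely supported sequences a = (a_0, a_1, a_2, …) with entries in K, and let q(a) := Σ_i a_i². Define d(a,b) := 2^{−ν(q(a−b))} on V. Then (V, d) fails property (MC): there exist a sequence (x_n) in V and radii r_n with r_n ≥ 4^{−1} > 0 for all n, such that the closed balls B_n := {y ∈ V : d(x_n, y) ≤ r_n} satisfy B_{n+1} ⊆ B_n for all n, yet ⋂_n B_n = ∅. -/

import Mathlib

/-- The quadratic form `q(a) = Σᵢ aᵢ²` on the space of finitely supported sequences with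
entries in the Hahn series field `ℝ((t^ℝ))`. -/
noncomputable def qForm (a : ℕ →₀ HahnSeries ℝ ℝ) : HahnSeries ℝ ℝ :=
  a.sum fun _ v => v ^ 2

/-- The ultrametric `d(a,b) = 2^{-ν(q(a-b))}` on the space of finitely supported sequences,
where `ν = orderTop` is the canonical valuation of `ℝ((t^ℝ))` (with `2^{-∞} = 0`). -/
noncomputable def dForm (a b : ℕ →₀ HahnSeries ℝ ℝ) : ℝ :=
  WithTop.recTopCoe 0 (fun r : ℝ => (2 : ℝ) ^ (-r)) (HahnSeries.orderTop (qForm (a - b)))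


/-! Squares in `ℝ((t^ℝ))` have positive leading coefficients, so no cancellation occurs in
`q`: `ν(q a) = 2 minᵢ ν(aᵢ)`, and the closed ball of radius `2^{-2ρ}` around `x` is the
coordinatewise condition `ν(yᵢ - xᵢ) ≥ ρ`. For `εₙ = 1 - 2⁻ⁿ` and `xₙ = Σ_{i<n} t^{εᵢ} eᵢ` the
balls of radius `2^{-2εₙ} ≥ 1/4` around `xₙ` are nested, but a common point `y` would satisfy
`ν(t^{ε_N} - y_N) ≥ ε_{N+1} > ε_N` for every `N`, which fails once `y_N = 0`. -/

open HahnSeries Finset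

lemma HahnSeries.coeff_sq_add_self_of_le_orderTop {Γ R : Type*} [AddCommMonoid Γ] [LinearOrder Γ]
    [IsOrderedCancelAddMonoid Γ] [CommRing R] [IsDomain R] {x : HahnSeries Γ R} {m : Γ}
    (h : (m : WithTop Γ) ≤ x.orderTop) : (x ^ 2).coeff (m + m) = x.coeff m ^ 2 := by
  rcases eq_or_ne x 0 with rfl | hx
  · simp
  rw [← order_eq_orderTop_of_ne_zero hx, WithTop.coe_le_coe] at h
  rcases h.eq_or_lt with rfl | hlt
  · rw [sq, sq, coeff_mul_order_add_order, leadingCoeff_eq]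
  · have hsq : m + m < (x ^ 2).order := by
      rw [order_pow, two_nsmul]
      exact add_lt_add hlt hlt
    rw [coeff_eq_zero_of_lt_order hlt, coeff_eq_zero_of_lt_order hsq, sq, zero_mul]

lemma orderTop_qForm_le (a : ℕ →₀ HahnSeries ℝ ℝ) (j : ℕ) :
    (qForm a).orderTop ≤ 2 • (a j).orderTop := by
  rcases eq_or_ne (a j) 0 with hj | hj
  · simp [hj, two_nsmul]
  obtain ⟨i₀, hi₀, hmin⟩ := a.support.exists_min_image (fun i => (a i).orderTop)
    ⟨j, Finsupp.mem_support_iff.mpr hj⟩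
  have hi₀ : a i₀ ≠ 0 := Finsupp.mem_support_iff.mp hi₀
  set m := (a i₀).order
  have hm : ∀ i, (m : WithTop ℝ) ≤ (a i).orderTop := fun i => by
    by_cases hi : i ∈ a.support
    · exact order_eq_orderTop_of_ne_zero hi₀ ▸ hmin i hi
    · simp [Finsupp.notMem_support_iff.mp hi]
  -- no cancellation: the coefficient at `2m` is a sum of squares, one of them nonzero
  have hcoeff : 0 < (qForm a).coeff (m + m) := by
    rw [qForm, Finsupp.sum, coeff_sum]
    simp only [coeff_sq_add_self_of_le_orderTop (hm _)]
    refine sum_pos' (fun i _ => sq_nonneg _) ⟨i₀, Finsupp.mem_support_iff.mpr hi₀, ?_⟩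
    exact pow_two_pos_of_ne_zero (coeff_order_eq_zero.not.mpr hi₀)
  calc (qForm a).orderTop ≤ ↑(m + m) := orderTop_le_of_coeff_ne_zero hcoeff.ne'
    _ = 2 • (a i₀).orderTop := by rw [← order_eq_orderTop_of_ne_zero hi₀, two_nsmul]; rfl
    _ ≤ 2 • (a j).orderTop := nsmul_le_nsmul_right (hmin j (Finsupp.mem_support_iff.mpr hj)) 2

lemma le_orderTop_qForm_iff {a : ℕ →₀ HahnSeries ℝ ℝ} {c : WithTop ℝ} :
    c ≤ (qForm a).orderTop ↔ ∀ i, c ≤ 2 • (a i).orderTop := by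
  refine ⟨fun h i => h.trans (orderTop_qForm_le a i), fun h => ?_⟩
  rw [qForm, Finsupp.sum, ← addVal_apply]
  exact AddValuation.map_le_sum _ fun i _ => by rw [AddValuation.map_pow, addVal_apply]; exact h i

lemma WithTop.coe_two_mul_le_two_nsmul_iff {x : WithTop ℝ} {ρ : ℝ} :
    ((2 * ρ : ℝ) : WithTop ℝ) ≤ 2 • x ↔ (ρ : WithTop ℝ) ≤ x := by
  induction x with
  | top => simp [two_nsmul]
  | coe x => norm_cast; rw [two_nsmul, two_mul]; constructor <;> intro h <;> linarith

lemma dForm_le_two_rpow_iff {x y : ℕ →₀ HahnSeries ℝ ℝ} {s : ℝ} :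
    dForm x y ≤ 2 ^ (-s) ↔ (s : WithTop ℝ) ≤ (qForm (x - y)).orderTop := by
  unfold dForm
  induction (qForm (x - y)).orderTop with
  | top => simpa using by positivity
  | coe v => simp [Real.rpow_le_rpow_left_iff one_lt_two]

lemma dForm_le_iff_forall_le_orderTop {x y : ℕ →₀ HahnSeries ℝ ℝ} {ρ : ℝ} :
    dForm x y ≤ 2 ^ (-(2 * ρ)) ↔ ∀ i, (ρ : WithTop ℝ) ≤ ((x - y) i).orderTop := by
  simp only [dForm_le_two_rpow_iff, le_orderTop_qForm_iff, WithTop.coe_two_mul_le_two_nsmul_iff]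

noncomputable def monomialSum (ε : ℕ → ℝ) (n : ℕ) : ℕ →₀ HahnSeries ℝ ℝ :=
  ∑ i ∈ range n, Finsupp.single i (single (ε i) 1)

lemma monomialSum_apply (ε : ℕ → ℝ) (n i : ℕ) :
    monomialSum ε n i = if i < n then single (ε i) 1 else 0 := by
  simp [monomialSum, Finsupp.finsetSum_apply, Finsupp.single_apply]

lemma le_orderTop_monomialSum_sub_succ (ε : ℕ → ℝ) (n i : ℕ) :
    (ε n : WithTop ℝ) ≤ ((monomialSum ε n - monomialSum ε (n + 1)) i).orderTop := by
  rw [Finsupp.sub_apply, monomialSum_apply, monomialSum_apply]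
  rcases lt_trichotomy i n with hi | rfl | hi
  · simp [hi, hi.trans (Nat.lt_succ_self n)]
  · simp
  · simp [hi.not_gt, hi.not_ge]

lemma setOf_dForm_monomialSum_succ_subset {ε : ℕ → ℝ} (hε : Monotone ε) (n : ℕ) :
    {y | dForm (monomialSum ε (n + 1)) y ≤ 2 ^ (-(2 * ε (n + 1)))} ⊆
      {y | dForm (monomialSum ε n) y ≤ 2 ^ (-(2 * ε n))} := by
  intro y hy
  simp only [Set.mem_ofPred_eq, dForm_le_iff_forall_le_orderTop] at hy ⊢
  intro i
  rw [← sub_add_sub_cancel _ (monomialSum ε (n + 1)), Finsupp.add_apply]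
  refine le_trans (le_min ?_ ?_) min_orderTop_le_orderTop_add
  · exact le_orderTop_monomialSum_sub_succ ε n i
  · exact (WithTop.coe_le_coe.mpr (hε n.le_succ)).trans (hy i)

lemma iInter_setOf_dForm_monomialSum_eq_empty {ε : ℕ → ℝ} (hε : StrictMono ε) :
    ⋂ n, {y | dForm (monomialSum ε n) y ≤ 2 ^ (-(2 * ε n))} = ∅ := by
  refine Set.eq_empty_of_forall_notMem fun y hy => ?_
  obtain ⟨N, hN⟩ := Infinite.exists_notMem_finset y.support
  have := (dForm_le_iff_forall_le_orderTop.mp (Set.mem_iInter.mp hy (N + 1))) N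
  rw [Finsupp.sub_apply, monomialSum_apply, if_pos N.lt_succ_self,
    Finsupp.notMem_support_iff.mp hN, sub_zero, orderTop_single one_ne_zero,
    WithTop.coe_le_coe] at this
  exact (hε N.lt_succ_self).not_ge this

/-- The space of finitely supported sequences over `ℝ((t^ℝ))` with the
ultrametric induced by `ν ∘ q` fails property (MC): there is a nested sequence of closed
balls with radii bounded below by `4⁻¹ > 0` and empty intersection. -/
theorem not_MC_qForm :
    ∃ (x : ℕ → (ℕ →₀ HahnSeries ℝ ℝ)) (r : ℕ → ℝ),
      (∀ n, (4 : ℝ)⁻¹ ≤ r n) ∧ (0 : ℝ) < (4 : ℝ)⁻¹ ∧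
      (∀ n, {y | dForm (x (n + 1)) y ≤ r (n + 1)} ⊆ {y | dForm (x n) y ≤ r n}) ∧
      (⋂ n, {y | dForm (x n) y ≤ r n}) = ∅ := by
  set ε : ℕ → ℝ := fun n => 1 - 2⁻¹ ^ n
  have hε : StrictMono ε := fun m n hmn =>
    sub_lt_sub_left (pow_right_strictAnti₀ (by norm_num) (by norm_num) hmn) 1
  have hε_le : ∀ n, ε n ≤ 1 := fun n => sub_le_self 1 (by positivity)
  refine ⟨monomialSum ε, fun n => 2 ^ (-(2 * ε n)), fun n => ?_, by norm_num,
    setOf_dForm_monomialSum_succ_subset hε.monotone, iInter_setOf_dForm_monomialSum_eq_empty hε⟩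
  calc (4 : ℝ)⁻¹ = 2 ^ (-(2 * 1 : ℝ)) := by norm_num [Real.rpow_neg]
    _ ≤ 2 ^ (-(2 * ε n)) := Real.rpow_le_rpow_of_exponent_le one_le_two (by linarith [hε_le n])
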